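/- arXiv:1102.2546 — 2 statements merged into one kernel-verified Lean document; each statement's English description precedes it below -/
import Mathlib

section
/- Let m,n be integers with 1<m<n, φ a parallel calibration of degree m on ℝⁿ, ψ = (∂_r ⌟ φ)|_{S^{n−1}}, X a compact (m−1)-dimensional oriented submanifold of S^{n−1}, and 0<b₀<b₁. Then X is a ψ-submanifold of S^{n−1} if and only if the annulus cone A(b₀,b₁;X) is a φ-submanifold of A(b₀,b₁;S^{n−1}). -/
/- Common framework: parallel calibrations on ℝⁿ, oriented submanifolds (modelled as a set
together with a field of oriented orthonormal tangent frames, whose span is the tangent cone),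
calibrated (φ-)submanifolds, the sphere form ψ = (∂_r ⌟ φ)|_{S^{n-1}}, cones over subsets of the
sphere, cylindrical norms of normal vector fields, graphs G(ν), and exterior derivatives. -/

open MeasureTheory Set Metric
open scoped RealInnerProductSpace ENNReal

noncomputable section

/-- Euclidean space ℝⁿ. -/
abbrev E (n : ℕ) := EuclideanSpace ℝ (Fin n)

/-- `φ` has comass ≤ 1: `φ(v₁,…,v_m) ≤ 1` for all orthonormal `v₁,…,v_m`.  A *parallel
calibration* of degree `m` on ℝⁿ is (identified with) a constant-coefficient alternating
`m`-form of comass ≤ 1 (constant forms are automatically closed). -/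
def ComassLeOne {n m : ℕ} (φ : AlternatingMap ℝ (E n) ℝ (Fin m)) : Prop :=
  ∀ v : Fin m → E n, Orthonormal ℝ v → φ v ≤ 1

/-- Insert `x` in front of the `(m-1)`-tuple `v`, producing an `m`-tuple. -/
def minsert {n m : ℕ} (x : E n) (v : Fin (m - 1) → E n) : Fin m → E n :=
  fun i => if h : (i : ℕ) = 0 then x else v ⟨(i : ℕ) - 1, by have := i.isLt; omega⟩

/-- `M` is a `k`-dimensional oriented submanifold of ℝⁿ, with oriented orthonormal tangent
frame field `τ`: at every point of `M` the frame is orthonormal and spans the tangent space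
(tangent cone) of `M`. -/
def IsOrientedSubmanifold {n : ℕ} (k : ℕ) (M : Set (E n)) (τ : E n → Fin k → E n) : Prop :=
  (∀ x ∈ M, Orthonormal ℝ (τ x)) ∧
  (∀ x ∈ M, tangentConeAt ℝ M x = (Submodule.span ℝ (Set.range (τ x)) : Set (E n)))

/-- `M` (with frame `σ`) is a φ-submanifold contained in `U`: an `m`-dimensional oriented
submanifold on which `φ` restricts to the volume form, i.e. `φ = 1` on oriented orthonormal
tangent frames. -/
def IsPhiSubmanifoldOf {n m : ℕ} (φ : AlternatingMap ℝ (E n) ℝ (Fin m))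
    (M : Set (E n)) (σ : E n → Fin m → E n) (U : Set (E n)) : Prop :=
  M ⊆ U ∧ IsOrientedSubmanifold m M σ ∧ ∀ x ∈ M, φ (σ x) = 1

/-- `X` (with frame `τ`) is a ψ-submanifold of the unit sphere, where
`ψ = (∂_r ⌟ φ)|_{S^{n-1}}`:  at `x ∈ S^{n-1}` one has `ψ_x(v₁,…,v_{m-1}) = φ(x,v₁,…,v_{m-1})`
(the radial unit vector at `x` is `x` itself). -/
def IsPsiSubmanifold {n m : ℕ} (φ : AlternatingMap ℝ (E n) ℝ (Fin m))
    (X : Set (E n)) (τ : E n → Fin (m - 1) → E n) : Prop :=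
  X ⊆ sphere (0 : E n) 1 ∧ IsOrientedSubmanifold (m - 1) X τ ∧
    ∀ x ∈ X, φ (minsert x (τ x)) = 1

/-- The cone `A(b₀,b₁;X)`: preimage of `(b₀,b₁) × X` under polar coordinates. -/
def coneA {n : ℕ} (b₀ b₁ : ℝ) (X : Set (E n)) : Set (E n) :=
  {a | b₀ < ‖a‖ ∧ ‖a‖ < b₁ ∧ ‖a‖⁻¹ • a ∈ X}

/-- The oriented orthonormal frame of the cone `A(b₀,b₁;X)` induced by a frame `τ` of `X`:
the radial unit vector followed by the frame of `X` at the radial projection. -/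
def coneFrame {n m : ℕ} (τ : E n → Fin (m - 1) → E n) : E n → Fin m → E n :=
  fun a => minsert (‖a‖⁻¹ • a) (τ (‖a‖⁻¹ • a))

/-- The radial projection `s(a) = a/|a|`. -/
def sphProj {n : ℕ} (a : E n) : E n := ‖a‖⁻¹ • a

/-- The pullback `s*ψ` of `ψ = (∂_r ⌟ φ)|_{S^{n-1}}` under the radial projection `s`,
as an `(m-1)`-form on `ℝⁿ∖{0}`:
`(s*ψ)_a(v₁,…,v_{m-1}) = ψ_{s(a)}(ds_a v₁, …, ds_a v_{m-1})`. -/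
def pullPsi {n m : ℕ} (φ : AlternatingMap ℝ (E n) ℝ (Fin m)) (a : E n)
    (v : Fin (m - 1) → E n) : ℝ :=
  φ (minsert (sphProj a) (fun j => fderiv ℝ (sphProj (n := n)) a (v j)))

/-- Exterior derivative of a `k`-form `ω` (given as a function of the point and of `k`
constant vectors) on ℝⁿ:
`dω_a(v₀,…,v_k) = Σᵢ (-1)ⁱ ∂_{vᵢ}[ω_y(v₀,…,v̂ᵢ,…,v_k)]|_{y=a}`. -/
def extD {n k : ℕ} (ω : E n → (Fin k → E n) → ℝ) (a : E n) (v : Fin (k + 1) → E n) : ℝ :=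
  ∑ i : Fin (k + 1),
    (-1 : ℝ) ^ (i : ℕ) * fderiv ℝ (fun y => ω y (fun j => v (i.succAbove j))) a (v i)

/-- `ν` is a field normal to the submanifold with frame `σ` along `A`. -/
def IsNormalField {n m : ℕ} (A : Set (E n)) (σ : E n → Fin m → E n) (ν : E n → E n) : Prop :=
  ∀ a ∈ A, ∀ i, ⟪ν a, σ a i⟫ = 0

/-- `‖ν‖_{C⁰_cyl} ≤ ε` on `A` : `sup |ν|/r ≤ ε` (cylindrical metric `dr²/r² + ds²`). -/
def cylC0Le {n : ℕ} (A : Set (E n)) (ν : E n → E n) (ε : ℝ) : Prop :=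
  ∀ a ∈ A, ‖ν a‖ / ‖a‖ ≤ ε

/-- `‖ν‖_{C¹_cyl} ≤ ε` on `A` : `sup (|ν|/r + |Dν|) ≤ ε` (cylindrical metric). -/
def cylC1Le {n : ℕ} (A : Set (E n)) (ν : E n → E n) (ε : ℝ) : Prop :=
  ∀ a ∈ A, ‖ν a‖ / ‖a‖ + ‖fderiv ℝ ν a‖ ≤ ε

/-- A cylindrical distance on ℝⁿ∖{0} inducing the metric `dr²/r² + ds²`. -/
def dCyl {n : ℕ} (a b : E n) : ℝ :=
  dist (sphProj a) (sphProj b) + |Real.log ‖a‖ - Real.log ‖b‖|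

/-- `‖ν‖_{C^{1,1/2}_cyl} ≤ ε` on `A` : the `C¹` bound together with a 1/2-Hölder bound on the
derivative, with respect to the cylindrical metric. -/
def cylC1HalfLe {n : ℕ} (A : Set (E n)) (ν : E n → E n) (ε : ℝ) : Prop :=
  cylC1Le A ν ε ∧
  ∀ a ∈ A, ∀ b ∈ A, ‖fderiv ℝ ν a - fderiv ℝ ν b‖ ≤ ε * dCyl a b ^ ((1 : ℝ) / 2)

/-- The graph map `a ↦ (|a|/√(|a|²+|ν(a)|²))(a + ν(a))`. -/
def graphMap {n : ℕ} (ν : E n → E n) (a : E n) : E n :=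
  (‖a‖ / Real.sqrt (‖a‖ ^ 2 + ‖ν a‖ ^ 2)) • (a + ν a)

/-- `G(ν)`, the graph of the normal field `ν` over `A`. -/
def graphSet {n : ℕ} (ν : E n → E n) (A : Set (E n)) : Set (E n) := graphMap ν '' A

/-- `M` is closed in the (open) set `U`. -/
def IsClosedIn {n : ℕ} (M U : Set (E n)) : Prop := closure M ∩ U ⊆ M

/-! Polar coordinates `(t, x) ↦ t • x` map `(b₀, b₁) × X` onto the cone, with differentiable
inverse `a ↦ (‖a‖, a / ‖a‖)`, so the tangent cone of `A(b₀,b₁;X)` at `a` is the span of the radial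
vector `a / ‖a‖` and the tangent space of `X` at `a / ‖a‖`. Tangent vectors of the sphere are
orthogonal to the position vector, so the cone frame is orthonormal. Finally, the value of `φ` on
the cone frame at `a` is the value of `ψ` on the frame of `X` at `a / ‖a‖`, and every point of `X`
is such a radial projection. -/

open Filter Topology

section TangentCone

variable {𝕜 E F : Type*} [NontriviallyNormedField 𝕜] [NormedAddCommGroup E] [NormedSpace 𝕜 E]
  [NormedAddCommGroup F] [NormedSpace 𝕜 F]

theorem HasFDerivWithinAt.apply_eq_zero_of_mem_tangentConeAt {f : E → F} {f' : E →L[𝕜] F}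
    {s : Set E} {x y : E} (hf : HasFDerivWithinAt f f' s x) (hs : ∀ z ∈ s, f z = f x)
    (hy : y ∈ tangentConeAt 𝕜 s x) : f' y = 0 := by
  have himage : f '' s ⊆ {f x} := by
    rintro _ ⟨z, hz, rfl⟩
    exact hs z hz
  refine tangentConeAt_subset_zero ?_ (tangentConeAt_mono himage (hf.mapsTo_tangent_cone hy))
  rw [accPt_iff_nhds]
  simpa using ⟨univ, univ_mem⟩

theorem tangentConeAt_prod_of_mem_nhds {s : Set E} {t : Set F} {x : E} {y : F} (hs : s ∈ 𝓝 x) :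
    tangentConeAt 𝕜 (s ×ˢ t) (x, y) = univ ×ˢ tangentConeAt 𝕜 t y := by
  ext ⟨α, w⟩
  refine ⟨fun h => ⟨trivial, ?_⟩, fun ⟨_, hw⟩ => ?_⟩
  · have hsnd := (ContinuousLinearMap.snd 𝕜 E F).hasFDerivWithinAt.mapsTo_tangent_cone h
    exact tangentConeAt_mono (snd_image_prod_subset s t) hsnd
  · obtain ⟨c, d, hc, hd, hcd⟩ := mem_tangentConeAt_iff_exists_seq_norm_tendsto_atTop.1 hw
    have hc_inv : Tendsto (fun n => (c n)⁻¹) atTop (𝓝 0) := by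
      simpa [tendsto_zero_iff_norm_tendsto_zero] using hc.inv_tendsto_atTop
    have hc_ne : ∀ᶠ n in atTop, c n ≠ 0 :=
      (hc.eventually_gt_atTop 0).mono fun n hn => norm_pos_iff.1 hn
    have hs' : ∀ᶠ n in atTop, x + (c n)⁻¹ • α ∈ s := by
      refine Tendsto.eventually ?_ hs
      simpa using tendsto_const_nhds.add (hc_inv.smul_const α)
    refine mem_tangentConeAt_iff_exists_seq_norm_tendsto_atTop.2
      ⟨c, fun n => ((c n)⁻¹ • α, d n), hc, ?_, ?_⟩
    · filter_upwards [hs', hd] with n h₁ h₂ using ⟨h₁, h₂⟩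
    · refine (tendsto_const_nhds.prodMk_nhds hcd).congr' ?_
      filter_upwards [hc_ne] with n hn
      simp [smul_smul, hn]

theorem tangentConeAt_image_eq_image_of_leftInvOn {f : E → F} {g : F → E} {f' : E →L[𝕜] F}
    {g' : F →L[𝕜] E} {t : Set E} {p : E} (hf : HasFDerivWithinAt f f' t p)
    (hg : HasFDerivWithinAt g g' (f '' t) (f p)) (hgf : LeftInvOn g f t) (hp : p ∈ t)
    (hfg' : f'.comp g' = ContinuousLinearMap.id 𝕜 F) :
    tangentConeAt 𝕜 (f '' t) (f p) = f' '' tangentConeAt 𝕜 t p := by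
  refine Subset.antisymm (fun y hy => ⟨g' y, ?_, ?_⟩) (image_subset_iff.2 hf.mapsTo_tangent_cone)
  · simpa [hgf.image_image, hgf hp] using hg.mapsTo_tangent_cone hy
  · simpa using congr($hfg' y)

end TangentCone

theorem inner_eq_zero_of_mem_tangentConeAt_sphere {F : Type*} [NormedAddCommGroup F]
    [InnerProductSpace ℝ F] {r : ℝ} {x y : F} (hx : x ∈ sphere (0 : F) r)
    (hy : y ∈ tangentConeAt ℝ (sphere (0 : F) r) x) : ⟪x, y⟫ = 0 := by
  have hconst : ∀ z ∈ sphere (0 : F) r, ‖z‖ ^ 2 = ‖x‖ ^ 2 := by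
    intro z hz
    rw [mem_sphere_zero_iff_norm.1 hz, mem_sphere_zero_iff_norm.1 hx]
  simpa using (hasStrictFDerivAt_norm_sq x).hasFDerivAt.hasFDerivWithinAt
    |>.apply_eq_zero_of_mem_tangentConeAt hconst hy

theorem range_minsert {n m : ℕ} (hm : 0 < m) (x : E n) (v : Fin (m - 1) → E n) :
    range (minsert x v) = insert x (range v) := by
  ext y
  constructor
  · rintro ⟨i, rfl⟩
    by_cases h : (i : ℕ) = 0
    · left; simp [minsert, h]
    · right
      exact ⟨⟨(i : ℕ) - 1, by have := i.isLt; omega⟩, by simp [minsert, h]⟩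
  · rintro (rfl | ⟨j, rfl⟩)
    · exact ⟨⟨0, hm⟩, by simp [minsert]⟩
    · refine ⟨⟨(j : ℕ) + 1, by have := j.isLt; omega⟩, ?_⟩
      simp only [minsert]
      rw [dif_neg (by simp)]
      exact congrArg v (Fin.ext (by simp))

theorem orthonormal_minsert {n m : ℕ} {x : E n} (hx : ‖x‖ = 1)
    {v : Fin (m - 1) → E n} (hv : Orthonormal ℝ v) (hxv : ∀ j, ⟪x, v j⟫ = 0) :
    Orthonormal ℝ (minsert x v) := by
  rw [orthonormal_iff_ite] at hv ⊢
  intro i j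
  by_cases hi : (i : ℕ) = 0 <;> by_cases hj : (j : ℕ) = 0
  · have hij : i = j := Fin.ext (by omega)
    simp only [minsert, hi, hj, dif_pos, if_pos hij]
    rw [real_inner_self_eq_norm_sq, hx]; norm_num
  · have hij : i ≠ j := fun h => hj (h ▸ hi)
    simp only [minsert]
    rw [dif_pos hi, dif_neg hj, if_neg hij]
    exact hxv _
  · have hij : i ≠ j := fun h => hi (h ▸ hj)
    simp only [minsert]
    rw [dif_neg hi, dif_pos hj, if_neg hij, real_inner_comm]
    exact hxv _
  · simp only [minsert]
    rw [dif_neg hi, dif_neg hj, hv]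
    congr 1
    simp only [eq_iff_iff, Fin.ext_iff]
    have := i.isLt; have := j.isLt
    constructor <;> intro h <;> omega

section Cone

variable {n : ℕ} {b₀ b₁ : ℝ} {X : Set (E n)}

theorem coneA_mono {Y : Set (E n)} (h : X ⊆ Y) : coneA b₀ b₁ X ⊆ coneA b₀ b₁ Y :=
  fun _ ⟨h₀, h₁, hX⟩ => ⟨h₀, h₁, h hX⟩

theorem sphProj_smul {t : ℝ} {x : E n} (ht : 0 < t) (hx : ‖x‖ = 1) : sphProj (t • x) = x := by
  rw [sphProj, norm_smul, hx, mul_one, Real.norm_of_nonneg ht.le, inv_smul_smul₀ ht.ne']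

theorem coneA_eq_image_smul (hb₀ : 0 ≤ b₀) (hX : X ⊆ sphere 0 1) :
    coneA b₀ b₁ X = (fun p : ℝ × E n => p.1 • p.2) '' (Ioo b₀ b₁ ×ˢ X) := by
  ext a
  constructor
  · rintro ⟨h₀, h₁, ha⟩
    exact ⟨(‖a‖, sphProj a), ⟨⟨h₀, h₁⟩, ha⟩, smul_inv_smul₀ (hb₀.trans_lt h₀).ne' a⟩
  · rintro ⟨⟨t, x⟩, ⟨⟨h₀, h₁⟩, hx⟩, rfl⟩
    have hx1 : ‖x‖ = 1 := mem_sphere_zero_iff_norm.1 (hX hx)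
    have hnorm : ‖t • x‖ = t := by
      rw [norm_smul, hx1, mul_one, Real.norm_of_nonneg (hb₀.trans h₀.le)]
    refine ⟨?_, ?_, ?_⟩
    · simpa [hnorm] using h₀
    · simpa [hnorm] using h₁
    · change sphProj (t • x) ∈ X
      rwa [sphProj_smul (hb₀.trans_lt h₀) hx1]

theorem sphProj_image_coneA (hb₀ : 0 ≤ b₀) (hb : b₀ < b₁) (hX : X ⊆ sphere 0 1) :
    sphProj '' coneA b₀ b₁ X = X := by
  refine Subset.antisymm (image_subset_iff.2 fun a ha => ha.2.2) fun x hx => ?_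
  have hmid : (b₀ + b₁) / 2 ∈ Ioo b₀ b₁ := ⟨by linarith, by linarith⟩
  refine ⟨((b₀ + b₁) / 2) • x, ?_, sphProj_smul (by linarith) (mem_sphere_zero_iff_norm.1 (hX hx))⟩
  rw [coneA_eq_image_smul hb₀ hX]
  exact ⟨(_, x), ⟨hmid, hx⟩, rfl⟩

theorem tangentConeAt_coneA (hb₀ : 0 ≤ b₀) (hX : X ⊆ sphere 0 1) {a : E n}
    (ha : a ∈ coneA b₀ b₁ X) :
    tangentConeAt ℝ (coneA b₀ b₁ X) a = (fun p : ℝ × E n => p.1 • sphProj a + ‖a‖ • p.2) ''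
      (univ ×ˢ tangentConeAt ℝ X (sphProj a)) := by
  obtain ⟨h₀, h₁, hax⟩ := ha
  have ha0 : a ≠ 0 := norm_pos_iff.1 (hb₀.trans_lt h₀)
  set f : ℝ × E n → E n := fun p => p.1 • p.2
  set g : E n → ℝ × E n := fun a => (‖a‖, sphProj a)
  have hfg : f ∘ g = id := funext fun b => by
    rcases eq_or_ne b 0 with rfl | hb
    · simp [f, g]
    · exact smul_inv_smul₀ (norm_ne_zero_iff.2 hb) b
  have hgf : LeftInvOn g f (Ioo b₀ b₁ ×ˢ X) := by
    rintro ⟨t, x⟩ ⟨⟨ht, -⟩, hx⟩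
    have hx1 : ‖x‖ = 1 := mem_sphere_zero_iff_norm.1 (hX hx)
    have ht0 : 0 < t := hb₀.trans_lt ht
    simp [f, g, sphProj_smul ht0 hx1, norm_smul, hx1, abs_of_pos ht0]
  have hf : HasFDerivAt f _ (g a) :=
    (hasFDerivAt_fst (𝕜 := ℝ) (p := g a)).smul (hasFDerivAt_snd (𝕜 := ℝ) (p := g a))
  have hg : DifferentiableAt ℝ g a :=
    (differentiableAt_id.norm ℝ ha0).prodMk
      (((differentiableAt_id.norm ℝ ha0).inv (norm_ne_zero_iff.2 ha0)).smul differentiableAt_id)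
  have hfg' := (hf.comp a hg.hasFDerivAt).unique (hfg ▸ hasFDerivAt_id a)
  have hfga : f (g a) = a := congrFun hfg a
  have key := tangentConeAt_image_eq_image_of_leftInvOn hf.hasFDerivWithinAt
    (by rw [hfga]; exact hg.hasFDerivAt.hasFDerivWithinAt) hgf ⟨⟨h₀, h₁⟩, hax⟩ hfg'
  rw [hfga, ← coneA_eq_image_smul hb₀ hX, tangentConeAt_prod_of_mem_nhds (Ioo_mem_nhds h₀ h₁)]
    at key
  rw [key]
  exact image_congr fun p _ => by simp [g, add_comm]

theorem tangentConeAt_coneA_eq_span (hb₀ : 0 ≤ b₀) (hX : X ⊆ sphere 0 1) {a : E n}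
    (ha : a ∈ coneA b₀ b₁ X) {s : Set (E n)}
    (hs : tangentConeAt ℝ X (sphProj a) = Submodule.span ℝ s) :
    tangentConeAt ℝ (coneA b₀ b₁ X) a = Submodule.span ℝ (insert (sphProj a) s) := by
  have hr : ‖a‖ ≠ 0 := (hb₀.trans_lt ha.1).ne'
  rw [tangentConeAt_coneA hb₀ hX ha, hs]
  ext y
  simp only [mem_image, mem_prod, mem_univ, true_and, SetLike.mem_coe, Submodule.mem_span_insert]
  constructor
  · rintro ⟨⟨α, w⟩, hw, rfl⟩
    exact ⟨α, ‖a‖ • w, Submodule.smul_mem _ _ hw, rfl⟩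
  · rintro ⟨α, z, hz, rfl⟩
    exact ⟨(α, ‖a‖⁻¹ • z), Submodule.smul_mem _ _ hz, by simp [smul_inv_smul₀ hr]⟩

variable {m : ℕ} {τ : E n → Fin (m - 1) → E n}

theorem orthonormal_coneFrame (hX : X ⊆ sphere 0 1) (hτ : IsOrientedSubmanifold (m - 1) X τ)
    {a : E n} (ha : sphProj a ∈ X) : Orthonormal ℝ (coneFrame τ a) := by
  have hx := hX ha
  refine orthonormal_minsert (mem_sphere_zero_iff_norm.1 hx) (hτ.1 _ ha) fun j => ?_
  refine inner_eq_zero_of_mem_tangentConeAt_sphere hx (tangentConeAt_mono hX ?_)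
  rw [hτ.2 _ ha]
  exact Submodule.subset_span (mem_range_self j)

theorem isOrientedSubmanifold_coneA (hm : 0 < m) (hb₀ : 0 ≤ b₀) (hX : X ⊆ sphere 0 1)
    (hτ : IsOrientedSubmanifold (m - 1) X τ) :
    IsOrientedSubmanifold m (coneA b₀ b₁ X) (coneFrame τ) := by
  refine ⟨fun a ha => orthonormal_coneFrame hX hτ ha.2.2, fun a ha => ?_⟩
  rw [tangentConeAt_coneA_eq_span hb₀ hX ha (hτ.2 _ ha.2.2), coneFrame, range_minsert hm]
  rfl

end Cone

theorem psi_submanifold_iff_cone_phi_submanifold_general {n m : ℕ} (hm : 1 < m)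
    (φ : AlternatingMap ℝ (E n) ℝ (Fin m))
    (X : Set (E n)) (τ : E n → Fin (m - 1) → E n)
    (hXs : X ⊆ sphere (0 : E n) 1)
    (hXsub : IsOrientedSubmanifold (m - 1) X τ)
    (b₀ b₁ : ℝ) (hb₀ : 0 < b₀) (hb : b₀ < b₁) :
    IsPsiSubmanifold φ X τ ↔
      IsPhiSubmanifoldOf φ (coneA b₀ b₁ X) (coneFrame τ)
        (coneA b₀ b₁ (sphere (0 : E n) 1)) := by
  constructor
  · rintro ⟨-, -, hφX⟩
    exact ⟨coneA_mono hXs, isOrientedSubmanifold_coneA (by omega) hb₀.le hXs hXsub,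
      fun a ha => hφX _ ha.2.2⟩
  · rintro ⟨-, -, hφA⟩
    refine ⟨hXs, hXsub, fun x hx => ?_⟩
    rw [← sphProj_image_coneA hb₀.le hb hXs] at hx
    obtain ⟨a, ha, rfl⟩ := hx
    exact hφA a ha

/-- Let `1 < m < n`, `φ` a parallel calibration of degree `m` on ℝⁿ,
`ψ = (∂_r ⌟ φ)|_{S^{n-1}}`, `X` a compact `(m-1)`-dimensional oriented submanifold of
`S^{n-1}` (with frame `τ`), and `0 < b₀ < b₁`.  Then `X` is a ψ-submanifold of `S^{n-1}` iff
the cone `A(b₀,b₁;X)` (with its induced frame) is a φ-submanifold of `A(b₀,b₁;S^{n-1})`. -/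
theorem psi_submanifold_iff_cone_phi_submanifold {n m : ℕ} (hm : 1 < m) (hmn : m < n)
    (φ : AlternatingMap ℝ (E n) ℝ (Fin m)) (hφ : ComassLeOne φ)
    (X : Set (E n)) (τ : E n → Fin (m - 1) → E n)
    (hXc : IsCompact X) (hXs : X ⊆ sphere (0 : E n) 1)
    (hXsub : IsOrientedSubmanifold (m - 1) X τ)
    (b₀ b₁ : ℝ) (hb₀ : 0 < b₀) (hb : b₀ < b₁) :
    IsPsiSubmanifold φ X τ ↔
      IsPhiSubmanifoldOf φ (coneA b₀ b₁ X) (coneFrame τ)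
        (coneA b₀ b₁ (sphere (0 : E n) 1)) :=
  psi_submanifold_iff_cone_phi_submanifold_general hm φ X τ hXs hXsub b₀ b₁ hb₀ hb
end
end

section
/- Let φ be a parallel calibration of degree m>1 on ℝⁿ and M a φ-submanifold of ℝⁿ. If ν is a vector field along M normal to M, then the restriction of the interior product ν ⌟ φ to M vanishes: (ν ⌟ φ)|_M = 0. Equivalently, φ(ν, v₁, …, v_{m−1}) = 0 whenever v₁,…,v_{m−1} are tangent to M at a point P and ν is normal to M at P. -/
/- Common framework: parallel calibrations on ℝⁿ, oriented submanifolds (modelled as a set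
together with a field of oriented orthonormal tangent frames, whose span is the tangent cone),
calibrated (φ-)submanifolds, the sphere form ψ = (∂_r ⌟ φ)|_{S^{n-1}}, cones over subsets of the
sphere, cylindrical norms of normal vector fields, graphs G(ν), and exterior derivatives. -/

open MeasureTheory Set Metric
open scoped RealInnerProductSpace ENNReal

noncomputable section

/-! On the unit vectors orthogonal to an orthonormal `w`, the linear function `z ↦ φ(z, w)`
is at most `1` by comass, so where it attains `±1` (at a vector `y` with `(y, w)` a permutation
of a calibrated frame) its derivative in every direction `x ⊥ y, w` must vanish: `φ(x, w) = 0`.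
Multilinearity reduces the theorem to tangent vectors taken from the frame, and a tuple of frame
vectors either repeats one (and `φ` vanishes) or misses exactly one, which plays the role of `y`. -/

theorem minsert_eq_cons {n k : ℕ} (x : E n) (v : Fin (k + 1 - 1) → E n) :
    minsert (m := k + 1) x v = Fin.cons x (v : Fin k → E n) := by
  funext i
  induction i using Fin.cases with
  | zero => simp [minsert]
  | succ j =>
    simp only [minsert, Fin.val_succ, Nat.add_sub_cancel, Fin.cons_succ]
    rw [dif_neg (by omega)]
    rfl

theorem MultilinearMap.map_eq_zero_of_forall_mem_span {R M N ι κ : Type*} [CommSemiring R]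
    [AddCommMonoid M] [Module R M] [AddCommMonoid N] [Module R N]
    [Fintype ι] [Fintype κ] [DecidableEq κ]
    (f : MultilinearMap R (fun _ : κ => M) N) (u : ι → M) (h : ∀ r : κ → ι, f (u ∘ r) = 0)
    {v : κ → M} (hv : ∀ j, v j ∈ Submodule.span R (Set.range u)) : f v = 0 := by
  choose c hc using fun j => (Submodule.mem_span_range_iff_exists_fun R).mp (hv j)
  obtain rfl : v = fun j => ∑ i, c j i • u i := funext fun j => (hc j).symm
  rw [f.map_sum]
  refine Finset.sum_eq_zero fun r _ => ?_
  rw [f.map_smul_univ, ← Function.comp_def u r, h r, smul_zero]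

section

variable {V : Type*} [NormedAddCommGroup V] [InnerProductSpace ℝ V] {k : ℕ}

theorem orthonormal_fin_cons_iff {x : V} {w : Fin k → V} :
    Orthonormal ℝ (Fin.cons x w : Fin (k + 1) → V) ↔
      ‖x‖ = 1 ∧ (∀ i, ⟪x, w i⟫ = 0) ∧ Orthonormal ℝ w := by
  simp only [orthonormal_iff_ite, Fin.forall_fin_succ, Fin.cons_zero, Fin.cons_succ,
    Fin.succ_inj, Fin.succ_ne_zero, (Fin.succ_ne_zero _).symm, if_true, if_false,
    real_inner_self_eq_norm_sq, pow_eq_one_iff_of_nonneg (norm_nonneg x) two_ne_zero,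
    forall_and, real_inner_comm x]
  tauto

namespace AlternatingMap

variable {φ : V [⋀^Fin (k + 1)]→ₗ[ℝ] ℝ}

theorem apply_cons_smul_add_smul (w : Fin k → V) (a b : ℝ) (p q : V) :
    φ (Fin.cons (a • p + b • q) w) = a * φ (Fin.cons p w) + b * φ (Fin.cons q w) := by
  change φ.curryLeft (a • p + b • q) w = a * φ.curryLeft p w + b * φ.curryLeft q w
  simp only [map_add, map_smul, add_apply, smul_apply, smul_eq_mul]

theorem apply_cons_le_norm (hφ : ∀ v, Orthonormal ℝ v → φ v ≤ 1) {z : V} {w : Fin k → V}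
    (hw : Orthonormal ℝ w) (hz : ∀ i, ⟪z, w i⟫ = 0) : φ (Fin.cons z w) ≤ ‖z‖ := by
  rcases eq_or_ne z 0 with rfl | hz0
  · simpa using (apply_cons_smul_add_smul (φ := φ) w 0 0 0 0).le
  have hunit : Orthonormal ℝ (Fin.cons (‖z‖⁻¹ • z) w : Fin (k + 1) → V) :=
    orthonormal_fin_cons_iff.mpr
      ⟨norm_smul_inv_norm hz0, fun i => by rw [real_inner_smul_left, hz i, mul_zero], hw⟩
  calc φ (Fin.cons z w) = ‖z‖ * φ (Fin.cons (‖z‖⁻¹ • z) w) := by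
        simpa [smul_smul, norm_ne_zero_iff.mpr hz0] using
          apply_cons_smul_add_smul (φ := φ) w ‖z‖ 0 (‖z‖⁻¹ • z) 0
    _ ≤ ‖z‖ * 1 := by gcongr; exact hφ _ hunit
    _ = ‖z‖ := mul_one _

theorem apply_cons_eq_zero_of_sq_eq_one (hφ : ∀ v, Orthonormal ℝ v → φ v ≤ 1) {x y : V}
    {w : Fin k → V} (hyw : Orthonormal ℝ (Fin.cons y w : Fin (k + 1) → V))
    (hy : φ (Fin.cons y w) ^ 2 = 1) (hxy : ⟪x, y⟫ = 0) (hxw : ∀ i, ⟪x, w i⟫ = 0) :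
    φ (Fin.cons x w) = 0 := by
  obtain ⟨hy1, hyw, hw⟩ := orthonormal_fin_cons_iff.mp hyw
  set ε := φ (Fin.cons y w)
  set c := φ (Fin.cons x w)
  set a := ‖x‖ ^ 2
  -- `φ(z, w) = 1 + a + c²` exceeds `‖z‖ = √((1 + a)² + c² a)` unless `c = 0`.
  set z := ((1 + a) * ε) • y + c • x
  have hφz : φ (Fin.cons z w) = 1 + a + c ^ 2 := by
    rw [apply_cons_smul_add_smul]; linear_combination (1 + a) * hy
  have hz2 : ‖z‖ ^ 2 = (1 + a) ^ 2 + c ^ 2 * a := by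
    rw [norm_add_sq_real, real_inner_smul_left, real_inner_smul_right, real_inner_comm, hxy,
      norm_smul, norm_smul, hy1, mul_pow, mul_pow, Real.norm_eq_abs, Real.norm_eq_abs, sq_abs,
      sq_abs]
    linear_combination (1 + a) ^ 2 * hy
  have hzw : ∀ i, ⟪z, w i⟫ = 0 := fun i => by
    simp only [z, inner_add_left, real_inner_smul_left, hyw i, hxw i, mul_zero, add_zero]
  have hle := hφz ▸ apply_cons_le_norm hφ hw hzw
  have ha : 0 ≤ a := sq_nonneg _
  nlinarith [pow_le_pow_left₀ (by positivity) hle 2, sq_nonneg c]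

theorem apply_cons_comp_eq_zero (hφ : ∀ v, Orthonormal ℝ v → φ v ≤ 1) {u : Fin (k + 1) → V}
    (hu : Orthonormal ℝ u) (hφu : φ u = 1) {x : V} (hx : ∀ i, ⟪x, u i⟫ = 0)
    (r : Fin k → Fin (k + 1)) : φ (Fin.cons x (u ∘ r)) = 0 := by
  by_cases hr : Function.Injective r
  swap
  · exact φ.map_eq_zero_of_not_injective _ fun h => hr (Fin.cons_injective_iff.mp h).2.of_comp
  obtain ⟨i₀, hi₀⟩ : ∃ i₀, i₀ ∉ Set.range r := by
    by_contra! h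
    simpa using Fintype.card_le_of_surjective r h
  have he : Function.Bijective (Fin.cons i₀ r : Fin (k + 1) → Fin (k + 1)) :=
    Finite.injective_iff_bijective.mp (Fin.cons_injective_iff.mpr ⟨hi₀, hr⟩)
  set π := Equiv.ofBijective _ he
  have hπ : u ∘ π = Fin.cons (u i₀) (u ∘ r) := Fin.comp_cons u i₀ r
  refine φ.apply_cons_eq_zero_of_sq_eq_one hφ (hπ ▸ hu.comp π π.injective) ?_ (hx i₀)
    fun i => hx (r i)
  rw [← hπ, φ.map_perm u π, hφu]
  rcases Int.units_eq_one_or (Equiv.Perm.sign π) with h | h <;> simp [h]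

end AlternatingMap

end

/-- **Proposition 3.3.**  Let `φ` be a parallel calibration of degree `m > 1`
on ℝⁿ and `M` a φ-submanifold of ℝⁿ (with frame `σ`).  If `ν` is normal to `M` at `P ∈ M` and
`v₁,…,v_{m-1}` are tangent to `M` at `P`, then `φ(ν, v₁, …, v_{m-1}) = 0`; that is,
`(ν ⌟ φ)|_M = 0`. -/
theorem normal_contraction_vanishes {n m : ℕ} (hm : 1 < m)
    (φ : AlternatingMap ℝ (E n) ℝ (Fin m)) (hφ : ComassLeOne φ)
    (M : Set (E n)) (σ : E n → Fin m → E n)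
    (hM : IsPhiSubmanifoldOf φ M σ Set.univ)
    (P : E n) (hP : P ∈ M) (ν : E n) (hν : ∀ i, ⟪ν, σ P i⟫ = 0)
    (v : Fin (m - 1) → E n)
    (hv : ∀ j, v j ∈ Submodule.span ℝ (Set.range (σ P))) :
    φ (minsert ν v) = 0 := by
  obtain ⟨k, rfl⟩ : ∃ k, m = k + 1 := ⟨m - 1, by omega⟩
  obtain ⟨-, ⟨hframe, -⟩, hcalibrated⟩ := hM
  rw [minsert_eq_cons]
  exact (φ.curryLeft ν).toMultilinearMap.map_eq_zero_of_forall_mem_span (σ P)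
    (fun r => φ.apply_cons_comp_eq_zero hφ (hframe P hP) (hcalibrated P hP) hν r) hv
end
end
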